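/- Let Λ be a numerical semigroup of genus g > 2 with conductor c whose left elements have gcd d > 1, such that Λ has exactly three minimal generators ≥ c, and both c and c+1 are minimal generators with gcd of (left elements together with c) greater than 1. Then Λ = {4k : k ≥ 0} ∪ [4n+2, ∞) for some n ≥ 1. -/
import Mathlib

def IsNumSgp (S : Set ℕ) : Prop :=
  0 ∈ S ∧ (∀ a ∈ S, ∀ b ∈ S, a + b ∈ S) ∧ Sᶜ.Finite

noncomputable def multNS (S : Set ℕ) : ℕ := sInf {x | x ∈ S ∧ x ≠ 0}

noncomputable def condNS (S : Set ℕ) : ℕ := sInf {c : ℕ | ∀ n, c ≤ n → n ∈ S}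

noncomputable def genusNS (S : Set ℕ) : ℕ := Sᶜ.ncard

def IsMinGen (S : Set ℕ) (a : ℕ) : Prop :=
  a ∈ S ∧ a ≠ 0 ∧ ¬ ∃ x ∈ S, ∃ y ∈ S, x ≠ 0 ∧ y ≠ 0 ∧ x + y = a

def leftElts (S : Set ℕ) : Set ℕ := {x | x ∈ S ∧ x < condNS S}

def IsOrdinary (S : Set ℕ) : Prop := ∃ m : ℕ, S = {0} ∪ {n | m ≤ n}

def IsChild (S C : Set ℕ) : Prop :=
  ∃ a, IsMinGen S a ∧ condNS S ≤ a ∧ C = S \ {a}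

def IsDescendant (S T : Set ℕ) : Prop := Relation.ReflTransGen IsChild S T

def pushNS (m : ℕ) (S : Set ℕ) : Set ℕ := {0} ∪ (fun x => m + x) '' S

lemma NS.csp {S : Set ℕ} (h : IsNumSgp S) : ∀ n, condNS S ≤ n → n ∈ S := by
  have hne : {c : ℕ | ∀ n, c ≤ n → n ∈ S}.Nonempty := by
    obtain ⟨N, hN⟩ := h.2.2.bddAbove
    refine ⟨N + 1, fun n hn => ?_⟩
    by_contra hns
    exact absurd (hN hns) (by omega)
  exact Nat.sInf_mem hne

lemma NS.mult_mem {S : Set ℕ} (h : IsNumSgp S) : multNS S ∈ S ∧ multNS S ≠ 0 := by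
  have hne : {x : ℕ | x ∈ S ∧ x ≠ 0}.Nonempty :=
    ⟨condNS S + 1, NS.csp h _ (by omega), by omega⟩
  exact Nat.sInf_mem hne

lemma NS.mult_le {S : Set ℕ} (h : IsNumSgp S) : ∀ x ∈ S, x ≠ 0 → multNS S ≤ x :=
  fun x hx hx0 => Nat.sInf_le ⟨hx, hx0⟩

lemma NS.mul_mem {S : Set ℕ} (h : IsNumSgp S) : ∀ k, k * multNS S ∈ S := by
  intro k
  induction k with
  | zero => simpa using h.1
  | succ n ih =>
    have := h.2.1 _ ih _ (NS.mult_mem h).1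
    simpa [Nat.succ_mul] using this

lemma NS.c4 {S : Set ℕ} (h : IsNumSgp S) (hg : 2 < genusNS S) : 4 ≤ condNS S := by
  have hsub : Sᶜ ⊆ Set.Ico 1 (condNS S) := by
    intro x hx
    have h1 : x ≠ 0 := fun h' => hx (h' ▸ h.1)
    have h2 : x < condNS S := by
      by_contra hlt
      exact hx (NS.csp h x (by omega))
    exact ⟨by omega, h2⟩
  have hle := Set.ncard_le_ncard hsub (Set.finite_Ico 1 _)
  have hico : (Set.Ico 1 (condNS S)).ncard = condNS S - 1 := by
    rw [show Set.Ico 1 (condNS S) = ↑(Finset.Ico 1 (condNS S)) by simp,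
      Set.ncard_coe_finset]
    simp
  unfold genusNS at hg
  omega

lemma NS.minGen_of {S : Set ℕ} (h : IsNumSgp S) (t : ℕ) (ht0 : t ≠ 0)
    (h1 : condNS S ≤ t) (h2 : t < condNS S + multNS S)
    (hns : ∀ x ∈ leftElts S, x ≠ 0 → ∀ y ∈ leftElts S, y ≠ 0 → x + y ≠ t) :
    IsMinGen S t := by
  refine ⟨NS.csp h t h1, ht0, ?_⟩
  rintro ⟨x, hx, y, hy, hx0, hy0, hxy⟩
  have hmx := NS.mult_le h x hx hx0
  have hmy := NS.mult_le h y hy hy0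
  have hxc : x < condNS S := by omega
  have hyc : y < condNS S := by omega
  exact hns x ⟨hx, hxc⟩ hx0 y ⟨hy, hyc⟩ hy0 hxy

lemma four_in_three {G : Set ℕ} (hG : G.ncard = 3) {a b e f : ℕ}
    (ha : a ∈ G) (hb : b ∈ G) (he : e ∈ G) (hf : f ∈ G)
    (hlt : a < b ∧ b < e ∧ e < f) : False := by
  have hfin : G.Finite := by
    by_contra hinf
    rw [Set.Infinite.ncard hinf] at hG
    omega
  have hsub : ({a, b, e, f} : Set ℕ) ⊆ G := by
    intro x hx
    rcases hx with rfl | rfl | rfl | rfl <;> assumption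
  have h4 : ({a, b, e, f} : Set ℕ).ncard = 4 := by
    rw [Set.ncard_insert_of_notMem (by simp; omega) (Set.toFinite _),
        Set.ncard_insert_of_notMem (by simp; omega) (Set.toFinite _),
        Set.ncard_insert_of_notMem (by simp; omega) (Set.toFinite _),
        Set.ncard_singleton]
  have := Set.ncard_le_ncard hsub hfin
  omega

lemma count_nondvd (c d k m : ℕ) (hd : 0 < d) (hm : m = d * k) :
    m - k ≤ ((Finset.Ico c (c + m)).filter (fun t => ¬ d ∣ t)).card := by
  classical
  have hdvd : ((Finset.Ico c (c + m)).filter (fun t => d ∣ t)).card ≤ k := by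
    have hmap : ∀ x ∈ (Finset.Ico c (c + m)).filter (fun t => d ∣ t),
        (x - c) / d ∈ Finset.range k := by
      intro x hx
      simp only [Finset.mem_filter, Finset.mem_Ico] at hx
      rw [Finset.mem_range]
      exact Nat.div_lt_of_lt_mul (by omega : x - c < d * k)
    have := Finset.card_le_card_of_injOn (fun x => (x - c) / d) hmap ?_
    · simpa using this
    intro x hx y hy hxy
    simp only [Finset.coe_filter, Set.mem_setOf_eq, Finset.mem_Ico] at hx hy
    obtain ⟨⟨hcx, hxu⟩, hdx⟩ := hx
    obtain ⟨⟨hcy, hyu⟩, hdy⟩ := hy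
    have e1 : (x - c + c) % d = 0 := by
      rw [Nat.sub_add_cancel hcx]
      obtain ⟨a, rfl⟩ := hdx
      exact Nat.mul_mod_right d a
    have e2 : (y - c + c) % d = 0 := by
      rw [Nat.sub_add_cancel hcy]
      obtain ⟨a, rfl⟩ := hdy
      exact Nat.mul_mod_right d a
    have h3 : (x - c) % d = (y - c) % d :=
      Nat.ModEq.add_right_cancel' c (e1.trans e2.symm)
    have h4 := Nat.div_add_mod (x - c) d
    have h5 := Nat.div_add_mod (y - c) d
    simp only at hxy
    rw [hxy, h3] at h4
    have h6 : x - c = y - c := h4.symm.trans h5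
    omega
  have hsum := Finset.card_filter_add_card_filter_not
    (s := Finset.Ico c (c + m)) (p := fun t => d ∣ t)
  rw [Nat.card_Ico] at hsum
  omega

theorem stmt15 (S : Set ℕ) (h : IsNumSgp S) (hg : 2 < genusNS S)
    (hd : ∃ d : ℕ, 1 < d ∧ ∀ x ∈ leftElts S, d ∣ x)
    (h3 : {a | IsMinGen S a ∧ condNS S ≤ a}.ncard = 3)
    (hc : IsMinGen S (condNS S)) (hc1 : IsMinGen S (condNS S + 1))
    (hdp : ∃ dp : ℕ, 1 < dp ∧ ∀ x ∈ leftElts S ∪ {condNS S}, dp ∣ x) :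
    ∃ n : ℕ, 1 ≤ n ∧ S = {x | 4 ∣ x} ∪ {x | 4 * n + 2 ≤ x} := by
  classical
  set c := condNS S with hcdef
  set m := multNS S with hmdef
  have hcsp : ∀ n, c ≤ n → n ∈ S := NS.csp h
  have hmS : m ∈ S := (NS.mult_mem h).1
  have hm0 : m ≠ 0 := (NS.mult_mem h).2
  have hmle : ∀ x ∈ S, x ≠ 0 → m ≤ x := NS.mult_le h
  have hmul : ∀ j : ℕ, j * m ∈ S := NS.mul_mem h
  have hc4 : 4 ≤ c := NS.c4 h hg
  -- multiplicity is below the conductor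
  have hmc : m < c := by
    have hmlec : m ≤ c := hmle c (hcsp c le_rfl) (by omega)
    rcases eq_or_lt_of_le hmlec with heq | hlt
    · exfalso
      have hgen : ∀ t, c ≤ t → t ≤ c + 3 → t ∈ {a | IsMinGen S a ∧ c ≤ a} := by
        intro t h1t h2t
        refine ⟨⟨hcsp t h1t, by omega, ?_⟩, h1t⟩
        rintro ⟨x, hx, y, hy, hx0, hy0, hxy⟩
        have h1 := hmle x hx hx0
        have h2 := hmle y hy hy0
        omega
      exact four_in_three h3 (hgen c le_rfl (by omega))
        (hgen (c+1) (by omega) (by omega)) (hgen (c+2) (by omega) (by omega))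
        (hgen (c+3) (by omega) (by omega)) (by omega)
    · exact hlt
  obtain ⟨d, hd1, hdall⟩ := hd
  obtain ⟨dp, hdp1, hdpall⟩ := hdp
  have hdm : d ∣ m := hdall m ⟨hmS, hmc⟩
  have hdpm : dp ∣ m := hdpall m (Or.inl ⟨hmS, hmc⟩)
  have hdpc : dp ∣ c := hdpall c (Or.inr rfl)
  -- finiteness of the generator set
  have hGfin : {a | IsMinGen S a ∧ c ≤ a}.Finite := by
    by_contra hinf
    rw [Set.Infinite.ncard hinf] at h3
    omega
  -- counting bound
  obtain ⟨k, hk⟩ := hdm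
  have hkpos : 0 < k := by
    rcases Nat.eq_zero_or_pos k with rfl | hp
    · simp at hk; omega
    · exact hp
  have hFsub : ↑((Finset.Ico c (c + m)).filter (fun t => ¬ d ∣ t))
      ⊆ {a | IsMinGen S a ∧ c ≤ a} := by
    intro t ht
    simp only [Finset.coe_filter, Set.mem_setOf_eq, Finset.mem_Ico] at ht
    obtain ⟨⟨h1t, h2t⟩, h3t⟩ := ht
    refine ⟨NS.minGen_of h t (by omega) h1t h2t ?_, h1t⟩
    intro x hx hx0 y hy hy0 hxy
    exact h3t (hxy ▸ Nat.dvd_add (hdall x hx) (hdall y hy))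
  have hF3 : ((Finset.Ico c (c + m)).filter (fun t => ¬ d ∣ t)).card ≤ 3 := by
    have := Set.ncard_le_ncard hFsub hGfin
    rwa [Set.ncard_coe_finset, h3] at this
  have hbound := count_nondvd c d k m (by omega) hk
  have hmk3 : m - k ≤ 3 := le_trans hbound hF3
  have hd4 : d ≤ 4 ∧ k ≤ 3 := by
    constructor
    · by_contra hdd
      have : 5 * k ≤ d * k := Nat.mul_le_mul_right k (by omega)
      omega
    · by_contra hkk
      have : 2 * 4 ≤ d * k := Nat.mul_le_mul (by omega) (by omega)
      have : 2 * k ≤ d * k := Nat.mul_le_mul_right k (by omega)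
      omega
  have hcases : (m = 2 ∧ d = 2) ∨ (m = 3 ∧ d = 3) ∨ (m = 4 ∧ (d = 2 ∨ d = 4))
      ∨ (m = 6 ∧ d = 2) := by
    obtain ⟨hdb, hkb⟩ := hd4
    interval_cases d <;> interval_cases k <;> omega
  -- helper : c = a + b with a b nonzero elements contradicts hc
  have hcne : ∀ a : ℕ, a ∈ S → a ≠ 0 → a < c → (c - a) ∈ S → False := by
    intro a ha ha0 hac hca
    exact hc.2.2 ⟨a, ha, c - a, hca, ha0, by omega, by omega⟩
  rcases hcases with ⟨hm2, hd2⟩ | ⟨hm3, hd3⟩ | ⟨hm4, _hd24⟩ | ⟨hm6, hd2⟩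
  · -- m = 2 : impossible
    exfalso
    have hdp2 : dp = 2 := by
      have := Nat.le_of_dvd (by omega) (hm2 ▸ hdpm)
      omega
    have h2c : 2 ∣ c := hdp2 ▸ hdpc
    have hmem : c - 2 ∈ S := by
      have := hmul ((c - 2) / 2)
      rw [hm2] at this
      rwa [Nat.div_mul_cancel (by omega : 2 ∣ c - 2)] at this
    exact hcne 2 (hm2 ▸ hmS) (by omega) (by omega) hmem
  · -- m = 3 : impossible
    exfalso
    have hdp3 : dp = 3 := by
      have := Nat.le_of_dvd (by omega) (hm3 ▸ hdpm)
      interval_cases dp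
      · exfalso; revert hdpm; rw [hm3]; decide
      · rfl
    have h3c : 3 ∣ c := hdp3 ▸ hdpc
    have hmem : c - 3 ∈ S := by
      have := hmul ((c - 3) / 3)
      rw [hm3] at this
      rwa [Nat.div_mul_cancel (by omega : 3 ∣ c - 3)] at this
    exact hcne 3 (hm3 ▸ hmS) (by omega) (by omega) hmem
  · -- m = 4 : the main case
    have h4c : ¬ 4 ∣ c := by
      intro h4
      have hmem : c - 4 ∈ S := by
        have := hmul ((c - 4) / 4)
        rw [hm4] at this
        rwa [Nat.div_mul_cancel (by omega : 4 ∣ c - 4)] at this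
      exact hcne 4 (hm4 ▸ hmS) (by omega) (by omega) hmem
    have h2c : 2 ∣ c := by
      have hdp4 : dp ∣ 4 := hm4 ▸ hdpm
      have := Nat.le_of_dvd (by omega) hdp4
      interval_cases dp
      · exact hdpc
      · exfalso; revert hdp4; decide
      · exact absurd hdpc h4c
    have hleft4 : ∀ x ∈ leftElts S, 4 ∣ x := by
      intro x hx
      have hdx : d ∣ x := hdall x hx
      have hd24 : d = 2 ∨ d = 4 := _hd24
      rcases hd24 with rfl | rfl
      · by_contra h4x
        have hx0 : x ≠ 0 := by omega
        have hxc : x < c := hx.2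
        have hmem : c - x ∈ S := by
          have := hmul ((c - x) / 4)
          rw [hm4] at this
          rwa [Nat.div_mul_cancel (by omega : 4 ∣ c - x)] at this
        exact hcne x hx.1 hx0 hxc hmem
      · exact hdx
    refine ⟨(c - 2) / 4, by omega, ?_⟩
    ext x
    simp only [Set.mem_union, Set.mem_setOf_eq]
    constructor
    · intro hxS
      by_cases hxc : x < c
      · exact Or.inl (hleft4 x ⟨hxS, hxc⟩)
      · right; omega
    · rintro (h4x | hge)
      · have := hmul (x / 4)
        rw [hm4] at this
        rwa [Nat.div_mul_cancel h4x] at this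
      · exact hcsp x (by omega)
  · -- m = 6 : impossible
    exfalso
    have hodd : ∀ t, c ≤ t → t < c + 6 → ¬ 2 ∣ t → t ∈ {a | IsMinGen S a ∧ c ≤ a} := by
      intro t h1t h2t hnt
      refine ⟨NS.minGen_of h t (by omega) h1t (by omega) ?_, h1t⟩
      intro x hx hx0 y hy hy0 hxy
      have h2x : 2 ∣ x := hd2 ▸ hdall x hx
      have h2y : 2 ∣ y := hd2 ▸ hdall y hy
      omega
    by_cases h2c : 2 ∣ c
    · exact four_in_three h3 ⟨hc, le_rfl⟩ ⟨hc1, by omega⟩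
        (hodd (c+3) (by omega) (by omega) (by omega))
        (hodd (c+5) (by omega) (by omega) (by omega)) (by omega)
    · exact four_in_three h3 ⟨hc, le_rfl⟩ ⟨hc1, by omega⟩
        (hodd (c+2) (by omega) (by omega) (by omega))
        (hodd (c+4) (by omega) (by omega) (by omega)) (by omega)
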